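/- arXiv:1911.10024 — 2 statements merged into one kernel-verified Lean document; each statement's English description precedes it below -/
import Mathlib

section
/- Any function S on finite multisets of elements of a countable set D can be written as S(X) = g(∑_{x∈X} f(x)) for some f : D → ℝ and g : ℝ → ℝ, when restricted to multisets of bounded size; concretely, with D = ℕ and bags of size at most N, taking f(x) = (N+1)^{-x} (injective on bounded multisets as a sum) yields such a decomposition for multisets with elements in {0,...,M}. -/
/-! Scaling by `(N + 1) ^ M` turns `∑ x ∈ X, (N + 1)⁻¹ ^ x` into the natural number
`∑ x ∈ X, (N + 1) ^ (M - x)`, whose base-`(N + 1)` digit at position `M - x` is the multiplicity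
of `x` in `X`. Multiplicities are at most `card X ≤ N`, so no carries occur and the number
determines `X`. Any `S` then factors through this injective map via an inverse on its image. -/

open Finset in
theorem Nat.eq_of_sum_range_mul_pow_eq {b : ℕ} :
    ∀ {K : ℕ} {f g : ℕ → ℕ}, (∀ i < K, f i < b) → (∀ i < K, g i < b) →
      ∑ i ∈ range K, f i * b ^ i = ∑ i ∈ range K, g i * b ^ i → ∀ i < K, f i = g i
  | 0, _, _, _, _, _ => by simp
  | K + 1, f, g, hf, hg, h => by
    have peel (d : ℕ → ℕ) :
        ∑ i ∈ range (K + 1), d i * b ^ i = d 0 + b * ∑ i ∈ range K, d (i + 1) * b ^ i := by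
      rw [sum_range_succ', mul_sum, add_comm]
      simp only [pow_succ, pow_zero, mul_one]
      congr 1
      exact sum_congr rfl fun i _ => by ring
    rw [peel f, peel g] at h
    have hf0 := hf 0 K.succ_pos
    have hg0 := hg 0 K.succ_pos
    have head : f 0 = g 0 := by
      simpa [Nat.add_mul_mod_self_left, Nat.mod_eq_of_lt hf0, Nat.mod_eq_of_lt hg0]
        using congrArg (· % b) h
    rw [head, Nat.add_left_cancel_iff, Nat.mul_left_cancel_iff (by omega)] at h
    have tail := Nat.eq_of_sum_range_mul_pow_eq (fun i _ => hf (i + 1) (by omega))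
      (fun i _ => hg (i + 1) (by omega)) h
    rintro (_ | i) hi
    · exact head
    · exact tail i (by omega)

namespace Multiset

theorem sum_map_pow_eq_sum_range_count (b : ℕ) {K : ℕ} {X : Multiset ℕ}
    (hX : ∀ x ∈ X, x < K) :
    (X.map (b ^ ·)).sum = ∑ i ∈ Finset.range K, X.count i * b ^ i := by
  have support : X.toFinset ⊆ Finset.range K := fun x hx =>
    Finset.mem_range.mpr (hX x (mem_toFinset.mp hx))
  rw [Finset.sum_multiset_map_count, Finset.sum_subset support fun x _ hx => by simp_all]
  simp only [smul_eq_mul]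

theorem eq_of_sum_map_pow_eq {b : ℕ} {X Y : Multiset ℕ}
    (hX : ∀ a, X.count a < b) (hY : ∀ a, Y.count a < b)
    (h : (X.map (b ^ ·)).sum = (Y.map (b ^ ·)).sum) : X = Y := by
  set K := (X + Y).sup + 1
  have bound {Z : Multiset ℕ} (hZ : Z ≤ X + Y) : ∀ x ∈ Z, x < K :=
    fun x hx => Nat.lt_succ_of_le (le_sup (mem_of_le hZ hx))
  have boundX := bound (le_add_right X Y)
  have boundY := bound (le_add_left Y X)
  rw [sum_map_pow_eq_sum_range_count b boundX, sum_map_pow_eq_sum_range_count b boundY] at h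
  ext a
  by_cases ha : a < K
  · exact Nat.eq_of_sum_range_mul_pow_eq (fun i _ => hX i) (fun i _ => hY i) h a ha
  · rw [count_eq_zero_of_notMem fun h => ha (boundX a h),
      count_eq_zero_of_notMem fun h => ha (boundY a h)]

theorem pow_mul_sum_map_inv_pow {b : ℕ} (hb : b ≠ 0) {M : ℕ} {X : Multiset ℕ}
    (hX : ∀ x ∈ X, x ≤ M) :
    (b : ℝ) ^ M * (X.map ((b : ℝ)⁻¹ ^ ·)).sum = (((X.map (M - ·)).map (b ^ ·)).sum : ℕ) := by
  rw [← sum_map_mul_left, Nat.cast_multiset_sum, map_map, map_map]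
  refine congrArg _ (map_congr rfl fun x hx => ?_)
  simp [inv_pow, pow_sub₀ (b : ℝ) (Nat.cast_ne_zero.mpr hb) (hX x hx)]

theorem injOn_sum_map_inv_pow (M N : ℕ) :
    Set.InjOn (fun X : Multiset ℕ => (X.map ((N + 1 : ℝ)⁻¹ ^ ·)).sum)
      {X | (∀ x ∈ X, x ≤ M) ∧ card X ≤ N} := by
  rintro X ⟨hX, hXc⟩ Y ⟨hY, hYc⟩ h
  have reflect {Z : Multiset ℕ} (hZ : ∀ x ∈ Z, x ≤ M) : (Z.map (M - ·)).map (M - ·) = Z := by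
    rw [map_map]
    exact (map_congr rfl fun x hx => Nat.sub_sub_self (hZ x hx)).trans (map_id _)
  have count_lt {Z : Multiset ℕ} (hZ : card Z ≤ N) (a : ℕ) : (Z.map (M - ·)).count a < N + 1 :=
    Nat.lt_succ_of_le ((count_le_card _ _).trans (by simpa using hZ))
  have scaled {Z : Multiset ℕ} (hZ : ∀ x ∈ Z, x ≤ M) :
      (N + 1 : ℝ) ^ M * (Z.map ((N + 1 : ℝ)⁻¹ ^ ·)).sum
        = (((Z.map (M - ·)).map ((N + 1) ^ ·)).sum : ℕ) := by
    exact_mod_cast pow_mul_sum_map_inv_pow N.succ_ne_zero hZ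
  rw [← reflect hX, ← reflect hY]
  refine congrArg _ (eq_of_sum_map_pow_eq (count_lt hXc) (count_lt hYc) ?_)
  exact_mod_cast (scaled hX).symm.trans ((congrArg _ h).trans (scaled hY))

end Multiset

theorem deep_sets_finite_decomposition_general (M N : ℕ)
    (S : Multiset ℕ → ℝ) :
    ∃ g : ℝ → ℝ, ∀ X : Multiset ℕ, (∀ x ∈ X, x ≤ M) → Multiset.card X ≤ N →
      S X = g ((X.map (fun x => ((N + 1 : ℝ))⁻¹ ^ x)).sum) :=
  ⟨S ∘ Function.invFunOn _ _, fun _ hX hXc =>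
    congrArg S ((Multiset.injOn_sum_map_inv_pow M N).leftInvOn_invFunOn ⟨hX, hXc⟩).symm⟩

theorem deep_sets_finite_decomposition (M N : ℕ) (hN : 1 ≤ N)
    (S : Multiset ℕ → ℝ) :
    ∃ g : ℝ → ℝ, ∀ X : Multiset ℕ, (∀ x ∈ X, x ≤ M) → Multiset.card X ≤ N →
      S X = g ((X.map (fun x => ((N + 1 : ℝ))⁻¹ ^ x)).sum) :=
  deep_sets_finite_decomposition_general M N S
end

section
/- The map sending a multiset X over {0,1,...,M} with |X| ≤ N to ∑_{x ∈ X} (N+1)^{−x} ∈ ℝ is injective. -/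
/-!
Multiplying by `(N + 1) ^ M` turns the sum into the natural number `∑_{x ∈ X} (N + 1) ^ (M - x)`,
whose base-`(N + 1)` digits are the multiplicities of `M, M - 1, …, 0` in `X`. These are at most
`|X| ≤ N`, so uniqueness of base-`(N + 1)` expansions recovers `X`.
-/

namespace Multiset

variable {M : ℕ} {X Y : Multiset ℕ}

theorem sum_map_eq_sum_range_count {β : Type*} [AddCommMonoid β] {n : ℕ} (hX : ∀ x ∈ X, x < n)
    (f : ℕ → β) : (X.map f).sum = ∑ j ∈ Finset.range n, X.count j • f j := by
  rw [Finset.sum_multiset_map_count]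
  refine Finset.sum_subset (fun x hx => Finset.mem_range.2 (hX x (mem_toFinset.1 hx)))
    fun x _ hx => ?_
  rw [count_eq_zero.2 (by simpa using hx), zero_smul]

theorem cast_sum_map_pow_sub {b : ℕ} (hb : b ≠ 0) (hX : ∀ x ∈ X, x ≤ M) :
    ((X.map fun x => b ^ (M - x)).sum : ℝ) = (X.map fun x => (b : ℝ)⁻¹ ^ x).sum * b ^ M := by
  rw [Nat.cast_multiset_sum, map_map, ← sum_map_mul_right]
  refine congrArg _ (map_congr rfl fun x hx => ?_)
  rw [Function.comp_apply, Nat.cast_pow, pow_sub₀ _ (Nat.cast_ne_zero.2 hb) (hX x hx), inv_pow,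
    mul_comm]

/-- The multiplicities of `M, M - 1, …, 0` in `X`, i.e. the base-`b` digits (least significant
first) of `∑_{x ∈ X} b ^ (M - x)` as soon as `card X < b`. -/
def countDigits (M : ℕ) (X : Multiset ℕ) : List ℕ :=
  List.ofFn fun i : Fin (M + 1) => X.count (M - i)

theorem ofDigits_countDigits (b : ℕ) (hX : ∀ x ∈ X, x ≤ M) :
    Nat.ofDigits b (countDigits M X) = (X.map fun x => b ^ (M - x)).sum := by
  simp only [countDigits, Nat.ofDigits_eq_sum_mapIdx, List.mapIdx_eq_ofFn, List.get_ofFn,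
    List.length_ofFn, Fin.val_cast, List.sum_ofFn]
  rw [sum_map_eq_sum_range_count (fun x hx => Nat.lt_succ_of_le (hX x hx)),
    ← Fin.sum_univ_eq_sum_range]
  refine Fintype.sum_equiv Fin.revPerm _ _ fun i => ?_
  simp [Fin.val_rev, Nat.sub_sub_self i.is_le]

theorem lt_of_mem_countDigits {b : ℕ} (hX : card X < b) : ∀ d ∈ countDigits M X, d < b := by
  simp only [countDigits, List.mem_ofFn, forall_exists_index]
  rintro d i rfl
  exact (count_le_card _ _).trans_lt hX

theorem eq_of_countDigits_eq (hX : ∀ x ∈ X, x ≤ M) (hY : ∀ y ∈ Y, y ≤ M)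
    (h : countDigits M X = countDigits M Y) : X = Y := by
  have hcount := congrFun (List.ofFn_inj.1 h)
  ext j
  by_cases hj : j ≤ M
  · simpa [Nat.sub_sub_self hj] using hcount ⟨M - j, by omega⟩
  · rw [count_eq_zero_of_notMem (mt (hX j) hj), count_eq_zero_of_notMem (mt (hY j) hj)]

end Multiset

theorem multiset_sum_injective (M N : ℕ) (hN : 1 ≤ N) :
    ∀ X Y : Multiset ℕ, (∀ x ∈ X, x ≤ M) → (∀ x ∈ Y, x ≤ M) →
      Multiset.card X ≤ N → Multiset.card Y ≤ N →
      (X.map (fun x => ((N + 1 : ℝ))⁻¹ ^ x)).sum =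
        (Y.map (fun x => ((N + 1 : ℝ))⁻¹ ^ x)).sum →
      X = Y := by
  intro X Y hX hY hcX hcY hsum
  have hnat :
      (X.map fun x => (N + 1) ^ (M - x)).sum = (Y.map fun x => (N + 1) ^ (M - x)).sum := by
    apply Nat.cast_injective (R := ℝ)
    rw [Multiset.cast_sum_map_pow_sub N.succ_ne_zero hX,
      Multiset.cast_sum_map_pow_sub N.succ_ne_zero hY]
    push_cast
    rw [hsum]
  refine Multiset.eq_of_countDigits_eq hX hY
    (Nat.ofDigits_inj_of_len_eq (b := N + 1) (by omega) (by simp [Multiset.countDigits])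
      (Multiset.lt_of_mem_countDigits (by omega)) (Multiset.lt_of_mem_countDigits (by omega)) ?_)
  rwa [Multiset.ofDigits_countDigits _ hX, Multiset.ofDigits_countDigits _ hY]
end
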